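/- Let X be a real Banach space and let (xₙ) be a bounded sequence in X, and let x ∈ X. If for every extreme point f of the closed unit ball of the dual space X* the sequence (f(xₙ)) converges to f(x), then (xₙ) converges weakly to x. -/

import Mathlib

/-!
Simons' argument. After subtracting `x₀` and passing to a subsequence, suppose `g (yₖ) ≥ δ > 0`
for all `k`; then the closed convex hulls `Wₙ` of the tails `{yₖ | k ≥ n}` stay at norm
`≥ c > 0`. Choose `wₙ ∈ Wₙ` greedily so that the partial sums `uₙ` of `h = ∑ 2⁻ⁿ⁻¹ wₙ` have
almost minimal norm. As `h = uₙ + 2⁻ⁿ vₙ` with `vₙ ∈ Wₙ`, this forces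
`‖h‖ - ‖uₙ‖ ≥ 2⁻ⁿ (c - ε)`. By Banach–Alaoglu and Krein–Milman some extreme point `b` of the
dual ball attains its norm at `h`, so `b (vₙ) ≥ c - ε` for every `n`, contradicting `b (yₖ) → 0`.
-/

open Set Filter Topology

theorem Convex.mem_of_hasSum {E : Type*} [AddCommGroup E] [Module ℝ E] [TopologicalSpace E]
    [ContinuousSMul ℝ E] {s : Set E} (hs : Convex ℝ s) (hcl : IsClosed s) {w : ℕ → ℝ}
    {z : ℕ → E} {x : E} (hw₀ : ∀ i, 0 ≤ w i) (hw₁ : HasSum w 1) (hz : ∀ i, z i ∈ s)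
    (hx : HasSum (fun i => w i • z i) x) : x ∈ s := by
  have hmass := hw₁.tendsto_sum_nat
  have hlim : Tendsto (fun n => (Finset.range n).centerMass w z) atTop (𝓝 x) := by
    simpa [Finset.centerMass] using (hmass.inv₀ one_ne_zero).smul hx.tendsto_sum_nat
  refine hcl.mem_of_tendsto hlim ?_
  filter_upwards [hmass.eventually_const_lt one_pos] with n hn
  exact hs.centerMass_mem (fun i _ => hw₀ i) hn fun i _ => hz i

theorem hasSum_inv_two_pow_succ : HasSum (fun n : ℕ => (2⁻¹ : ℝ) ^ (n + 1)) 1 := by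
  convert hasSum_geometric_two' 1 using 1
  ext n
  rw [pow_succ, inv_pow]
  ring

theorem IsCompact.exists_mem_extremePoints_isMaxOn {E : Type*} [AddCommGroup E] [Module ℝ E]
    [TopologicalSpace E] [T2Space E] [IsTopologicalAddGroup E] [ContinuousSMul ℝ E]
    [LocallyConvexSpace ℝ E] {s : Set E} (hs : IsCompact s) (hne : s.Nonempty)
    (l : StrongDual ℝ E) : ∃ x ∈ s.extremePoints ℝ, IsMaxOn l s x := by
  have hexp : IsExposed ℝ s (l.toExposed s) := ContinuousLinearMap.toExposed.isExposed
  obtain ⟨y, hys, hy⟩ := hs.exists_isMaxOn hne l.continuous.continuousOn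
  obtain ⟨x, hx⟩ := (hexp.isCompact hs).extremePoints_nonempty ⟨y, hys, hy⟩
  exact ⟨x, hexp.isExtreme.extremePoints_subset_extremePoints hx, (extremePoints_subset hx).2⟩

theorem exists_mem_extremePoints_norm_le_apply {X : Type*} [NormedAddCommGroup X]
    [NormedSpace ℝ X] (h : X) :
    ∃ b ∈ extremePoints ℝ {g : StrongDual ℝ X | ‖g‖ ≤ 1}, ‖h‖ ≤ b h := by
  have : LocallyConvexSpace ℝ (WeakDual ℝ X) := WeakBilin.locallyConvexSpace
  let evalAt : StrongDual ℝ (WeakDual ℝ X) := WeakBilin.eval _ h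
  obtain ⟨b, hb, hmax⟩ := (WeakDual.isCompact_closedBall (0 : StrongDual ℝ X) 1)
    |>.exists_mem_extremePoints_isMaxOn ⟨0, by simp⟩ evalAt
  obtain ⟨g, hg, hgh⟩ := exists_dual_vector'' ℝ h
  refine ⟨WeakDual.toStrongDual b, ?_, ?_⟩
  · have hball : {g : StrongDual ℝ X | ‖g‖ ≤ 1} = Metric.closedBall 0 1 := by ext; simp
    rw [hball, ← image_preimage_eq (Metric.closedBall _ _) WeakDual.toStrongDual.surjective,
      ← image_extremePoints]
    exact mem_image_of_mem _ hb
  · have hle : g h ≤ b h := hmax (show StrongDual.toWeakDual g ∈ _ by simpa using hg)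
    simpa [hgh] using hle

theorem inv_two_pow_mul_le_sub_of_le_midpoint_add {a : ℕ → ℝ} {H c ε : ℝ} (ha₀ : a 0 = 0)
    (hc : c ≤ H) (ha : ∀ n, a (n + 1) ≤ (a n + H) / 2 + ε * (2⁻¹ ^ (n + 1)) ^ 2) (n : ℕ) :
    (2⁻¹ : ℝ) ^ n * (c - ε + ε * 2⁻¹ ^ n) ≤ H - a n := by
  induction n with
  | zero => simp [ha₀, hc]
  | succ n ih =>
    have hn := ha n
    rw [pow_succ] at hn ⊢
    linear_combination (2⁻¹ : ℝ) * ih + hn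

section

variable {X : Type*} [NormedAddCommGroup X] [NormedSpace ℝ X]

theorem summable_inv_two_pow_succ_smul [CompleteSpace X] {w : ℕ → X} {M : ℝ}
    (hw : ∀ n, ‖w n‖ ≤ M) : Summable fun n => (2⁻¹ : ℝ) ^ (n + 1) • w n :=
  (hasSum_inv_two_pow_succ.summable.mul_right M).of_norm_bounded fun n => by
    rw [norm_smul, norm_pow, norm_inv, Real.norm_ofNat, inv_pow]
    exact mul_le_mul_of_nonneg_left (hw n) (by positivity)

theorem exists_seq_mem_forall_norm_partialSum_le {W : ℕ → Set X} (hne : ∀ n, (W n).Nonempty)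
    (t : ℕ → ℝ) {η : ℕ → ℝ} (hη : ∀ n, 0 < η n) :
    ∃ w : ℕ → X, ∀ n, w n ∈ W n ∧ ∀ w' ∈ W n,
      ‖∑ k ∈ Finset.range (n + 1), t k • w k‖ ≤
        ‖∑ k ∈ Finset.range n, t k • w k + t n • w'‖ + η n := by
  have hpick : ∀ n (v : X), ∃ w ∈ W n, ∀ w' ∈ W n, ‖v + t n • w‖ ≤ ‖v + t n • w'‖ + η n := by
    intro n v
    set f : X → ℝ := fun w => ‖v + t n • w‖
    obtain ⟨_, ⟨w, hw, rfl⟩, hlt⟩ := Real.lt_sInf_add_pos ((hne n).image f) (hη n)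
    refine ⟨w, hw, fun w' hw' => hlt.le.trans ?_⟩
    gcongr
    exact csInf_le ⟨0, by rintro _ ⟨_, _, rfl⟩; exact norm_nonneg _⟩ (mem_image_of_mem f hw')
  choose pick hpickW hpick using hpick
  let u : ℕ → X := fun n => Nat.rec 0 (fun k uk => uk + t k • pick k uk) n
  have hu : ∀ n, u n = ∑ k ∈ Finset.range n, t k • pick k (u k) := by
    intro n
    induction n with
    | zero => rfl
    | succ n ih => rw [Finset.sum_range_succ, ← ih]
  refine ⟨fun n => pick n (u n), fun n => ⟨hpickW _ _, ?_⟩⟩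
  rw [Finset.sum_range_succ, ← hu]
  exact hpick _ _

theorem exists_geometric_decomposition [CompleteSpace X] {W : ℕ → Set X} (hanti : Antitone W)
    (hconv : ∀ n, Convex ℝ (W n)) (hcl : ∀ n, IsClosed (W n)) (hne : ∀ n, (W n).Nonempty)
    {M : ℝ} (hM : ∀ n, ∀ x ∈ W n, ‖x‖ ≤ M) {c : ℝ} (hc : ∀ x ∈ W 0, c ≤ ‖x‖) {ε : ℝ}
    (hε : 0 < ε) :
    ∃ u v : ℕ → X, ∀ n, v n ∈ W n ∧ u n + (2⁻¹ : ℝ) ^ n • v n = v 0 ∧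
      (2⁻¹ : ℝ) ^ n * (c - ε) ≤ ‖v 0‖ - ‖u n‖ := by
  obtain ⟨w, hw⟩ := exists_seq_mem_forall_norm_partialSum_le hne (fun k => (2⁻¹ : ℝ) ^ (k + 1))
    (η := fun n => ε * (2⁻¹ ^ (n + 1)) ^ 2) fun n => by positivity
  choose hwW hwmin using hw
  set u : ℕ → X := fun n => ∑ k ∈ Finset.range n, (2⁻¹ : ℝ) ^ (k + 1) • w k
  set v : ℕ → X := fun n => ∑' j, (2⁻¹ : ℝ) ^ (j + 1) • w (j + n)
  have hsummable : ∀ n, Summable fun j => (2⁻¹ : ℝ) ^ (j + 1) • w (j + n) := fun n =>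
    summable_inv_two_pow_succ_smul fun j => hM _ _ (hwW (j + n))
  have hvW : ∀ n, v n ∈ W n := fun n =>
    (hconv n).mem_of_hasSum (hcl n) (fun _ => by positivity) hasSum_inv_two_pow_succ
      (fun j => hanti (Nat.le_add_left n j) (hwW (j + n))) (hsummable n).hasSum
  have hsplit : ∀ n, u n + (2⁻¹ : ℝ) ^ n • v n = v 0 := by
    intro n
    have hsum₀ : Summable fun k => (2⁻¹ : ℝ) ^ (k + 1) • w k := by simpa using hsummable 0
    simp only [u, v, add_zero]
    rw [← hsum₀.sum_add_tsum_nat_add n, ← (hsummable n).tsum_const_smul]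
    congr 2 with j
    rw [smul_smul, ← pow_add]
    ring_nf
  -- `u n + 2⁻¹ ^ (n + 1) • v n` is the midpoint of `u n` and `v 0`, so the greedy choice
  -- halves the gap `‖v 0‖ - ‖u n‖` at each step, up to the tolerance.
  have hstep : ∀ n, ‖u (n + 1)‖ ≤ (‖u n‖ + ‖v 0‖) / 2 + ε * (2⁻¹ ^ (n + 1)) ^ 2 := by
    intro n
    have hmid : u n + (2⁻¹ : ℝ) ^ (n + 1) • v n = (2⁻¹ : ℝ) • (u n + v 0) := by
      rw [← hsplit n, pow_succ]
      module
    calc ‖u (n + 1)‖ ≤ ‖u n + (2⁻¹ : ℝ) ^ (n + 1) • v n‖ + ε * (2⁻¹ ^ (n + 1)) ^ 2 :=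
          hwmin n (v n) (hvW n)
      _ ≤ (‖u n‖ + ‖v 0‖) / 2 + ε * (2⁻¹ ^ (n + 1)) ^ 2 := by
          rw [hmid, norm_smul, Real.norm_of_nonneg (by norm_num)]
          linarith [norm_add_le (u n) (v 0)]
  refine ⟨u, v, fun n => ⟨hvW n, hsplit n, ?_⟩⟩
  have hgap := inv_two_pow_mul_le_sub_of_le_midpoint_add (a := fun n => ‖u n‖) (by simp [u])
    (hc _ (hvW 0)) hstep n
  have hpos : (0 : ℝ) < 2⁻¹ ^ n := by positivity
  nlinarith [mul_pos hε (mul_pos hpos hpos)]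

theorem exists_mem_forall_exists_mem_le_apply [CompleteSpace X] {B : Set (StrongDual ℝ X)}
    (hB : ∀ b ∈ B, ‖b‖ ≤ 1) (hnorming : ∀ x, ∃ b ∈ B, ‖x‖ ≤ b x) {W : ℕ → Set X}
    (hanti : Antitone W) (hconv : ∀ n, Convex ℝ (W n)) (hcl : ∀ n, IsClosed (W n))
    (hne : ∀ n, (W n).Nonempty) {M : ℝ} (hM : ∀ n, ∀ x ∈ W n, ‖x‖ ≤ M) {c : ℝ}
    (hc : ∀ x ∈ W 0, c ≤ ‖x‖) {ε : ℝ} (hε : 0 < ε) :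
    ∃ b ∈ B, ∀ n, ∃ v ∈ W n, c - ε ≤ b v := by
  obtain ⟨u, v, hv⟩ := exists_geometric_decomposition hanti hconv hcl hne hM hc hε
  obtain ⟨b, hbB, hb⟩ := hnorming (v 0)
  refine ⟨b, hbB, fun n => ⟨v n, (hv n).1, ?_⟩⟩
  obtain ⟨-, hsplit, hgap⟩ := hv n
  have hbu : b (u n) ≤ ‖u n‖ :=
    (le_abs_self _).trans ((b.le_opNorm _).trans (mul_le_of_le_one_left (norm_nonneg _) (hB b hbB)))
  have hbv : b (v 0) = b (u n) + (2⁻¹ : ℝ) ^ n * b (v n) := by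
    rw [← hsplit, map_add, map_smul, smul_eq_mul]
  exact le_of_mul_le_mul_left (by linarith) (by positivity : (0 : ℝ) < 2⁻¹ ^ n)

theorem exists_mem_extremePoints_frequently_lt_apply [CompleteSpace X] {z : ℕ → X} {M : ℝ}
    (hz : ∀ k, ‖z k‖ ≤ M) {c : ℝ} (hc : ∀ x ∈ closedConvexHull ℝ (range z), c ≤ ‖x‖) {ε : ℝ}
    (hε : 0 < ε) :
    ∃ b ∈ extremePoints ℝ {g : StrongDual ℝ X | ‖g‖ ≤ 1}, ∃ᶠ k in atTop, c - ε < b (z k) := by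
  set W : ℕ → Set X := fun n => closedConvexHull ℝ (z '' Ici n)
  have hW_subset : ∀ {n} {S : Set X}, Convex ℝ S → IsClosed S → (∀ k, n ≤ k → z k ∈ S) →
      W n ⊆ S := fun hconv hcl hmem =>
    closedConvexHull_min (by rintro _ ⟨k, hk, rfl⟩; exact hmem k hk) hconv hcl
  obtain ⟨b, hb, hbW⟩ := exists_mem_forall_exists_mem_le_apply
    (B := extremePoints ℝ {g : StrongDual ℝ X | ‖g‖ ≤ 1}) (fun _ hb => hb.1)
    exists_mem_extremePoints_norm_le_apply
    (W := W) (fun m n hmn => hW_subset convex_closedConvexHull isClosed_closedConvexHull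
      fun k hk => subset_closedConvexHull ⟨k, hmn.trans hk, rfl⟩)
    (fun _ => convex_closedConvexHull) (fun _ => isClosed_closedConvexHull)
    (fun n => ⟨z n, subset_closedConvexHull ⟨n, mem_Ici.2 le_rfl, rfl⟩⟩)
    (fun n x hx => mem_closedBall_zero_iff.1 <| hW_subset (convex_closedBall 0 M)
      Metric.isClosed_closedBall (fun k _ => mem_closedBall_zero_iff.2 (hz k)) hx)
    (fun x hx => hc x ((closedConvexHull ℝ).monotone (image_subset_range _ _) hx)) (half_pos hε)
  refine ⟨b, hb, fun hle => ?_⟩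
  obtain ⟨N, hN⟩ := eventually_atTop.1 (hle.mono fun k => le_of_not_gt)
  obtain ⟨v, hvW, hbv⟩ := hbW N
  have : b v ≤ c - ε := hW_subset (convex_halfSpace_le b.isLinear _)
    (isClosed_le b.continuous continuous_const) hN hvW
  linarith

theorem eventually_apply_lt_of_forall_extremePoints_tendsto_zero [CompleteSpace X] {y : ℕ → X}
    {M : ℝ} (hy : ∀ n, ‖y n‖ ≤ M)
    (hext : ∀ f ∈ extremePoints ℝ {g : StrongDual ℝ X | ‖g‖ ≤ 1},
      Tendsto (fun n => f (y n)) atTop (𝓝 0))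
    (g : StrongDual ℝ X) {δ : ℝ} (hδ : 0 < δ) : ∀ᶠ n in atTop, g (y n) < δ := by
  by_contra hfreq
  simp only [not_eventually, not_lt] at hfreq
  obtain ⟨φ, hφ, hδφ⟩ := extraction_of_frequently_atTop hfreq
  have hg : 0 < ‖g‖ := norm_pos_iff.2 fun hg => by
    have := hδφ 0
    simp only [hg, zero_apply] at this
    linarith
  have hc : ∀ x ∈ closedConvexHull ℝ (range fun k => y (φ k)), δ / ‖g‖ ≤ ‖x‖ := by
    intro x hx
    have hgx : δ ≤ g x := closedConvexHull_min (by rintro _ ⟨k, rfl⟩; exact hδφ k)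
      (convex_halfSpace_ge g.isLinear δ) (isClosed_le continuous_const g.continuous) hx
    rw [div_le_iff₀ hg, mul_comm]
    exact hgx.trans ((le_abs_self _).trans (g.le_opNorm x))
  obtain ⟨b, hb, hfreq_b⟩ := exists_mem_extremePoints_frequently_lt_apply (fun k => hy (φ k)) hc
    (half_pos (div_pos hδ hg))
  have hlim := ((hext b hb).comp hφ.tendsto_atTop).eventually_lt_const
    (half_pos (div_pos hδ hg))
  obtain ⟨k, hk₁, hk₂⟩ := (hfreq_b.and_eventually hlim).exists
  simp only [Function.comp_apply] at hk₂
  linarith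

end

/-- **Rainwater's Theorem.** Let `X` be a real Banach space, `(xₙ)` a bounded
sequence in `X` and `x₀ ∈ X`. If `f (xₙ) → f x₀` for every extreme point `f`
of the closed unit ball of the dual space `X →L[ℝ] ℝ`, then `(xₙ)` converges
weakly to `x₀`, i.e. `g (xₙ) → g x₀` for every continuous linear functional `g`. -/
theorem rainwater {X : Type*} [NormedAddCommGroup X] [NormedSpace ℝ X]
    [CompleteSpace X] (x : ℕ → X) (x₀ : X) (M : ℝ) (hbdd : ∀ n, ‖x n‖ ≤ M)
    (hext : ∀ f : X →L[ℝ] ℝ,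
      f ∈ Set.extremePoints ℝ {g : X →L[ℝ] ℝ | ‖g‖ ≤ 1} →
      Filter.Tendsto (fun n => f (x n)) Filter.atTop (nhds (f x₀))) :
    ∀ g : X →L[ℝ] ℝ,
      Filter.Tendsto (fun n => g (x n)) Filter.atTop (nhds (g x₀)) := by
  intro g
  have hbdd₀ : ∀ n, ‖x n - x₀‖ ≤ M + ‖x₀‖ := fun n =>
    (norm_sub_le _ _).trans (by linarith [hbdd n])
  have hext₀ : ∀ f ∈ extremePoints ℝ {g : X →L[ℝ] ℝ | ‖g‖ ≤ 1},
      Tendsto (fun n => f (x n - x₀)) atTop (𝓝 0) := fun f hf => by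
    simpa using (hext f hf).sub_const (f x₀)
  have hlt := eventually_apply_lt_of_forall_extremePoints_tendsto_zero hbdd₀ hext₀
  have hg₀ : Tendsto (fun n => g (x n - x₀)) atTop (𝓝 0) := by
    refine tendsto_order.2 ⟨fun a ha => ?_, fun a ha => hlt g ha⟩
    filter_upwards [hlt (-g) (neg_pos.2 ha)] with n hn
    rw [neg_apply] at hn
    linarith
  simpa using hg₀.add_const (g x₀)
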